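/- arXiv:1105.1127 — 7 statements merged into one kernel-verified Lean document; each statement's English description precedes it below -/
import Mathlib

section
/- For every integer r ≥ 2, the set {⌊n + (n + n^{1/r})^{1/r}⌋ : n ∈ ℕ, n ≥ 1} equals the set of positive integers that are not r-th powers of a natural number. -/
/-- Key gap estimate: `(a+1)^r - a^r ≥ 2a+1` for `r ≥ 2`. -/
lemma stmt3_key (a r : ℕ) (hr : 2 ≤ r) : a ^ r + 2 * a + 1 ≤ (a + 1) ^ r := by
  obtain ⟨s, rfl⟩ : ∃ s, r = s + 2 := ⟨r - 2, by omega⟩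
  clear hr
  induction s with
  | zero =>
    have h : (a + 1) ^ (0 + 2) = a ^ (0 + 2) + 2 * a + 1 := by ring
    omega
  | succ t ih =>
    have h1 : (a + 1) ^ (t + 1 + 2) = (a + 1) * (a + 1) ^ (t + 2) := by ring
    have h2 : a ^ (t + 1 + 2) = a * a ^ (t + 2) := by ring
    have h3 : (a + 1) * (a ^ (t + 2) + 2 * a + 1) ≤ (a + 1) * (a + 1) ^ (t + 2) :=
      Nat.mul_le_mul_left _ ih
    have h4 : (a + 1) * (a ^ (t + 2) + 2 * a + 1) =
        a ^ (t + 1 + 2) + a ^ (t + 2) + 2 * a ^ 2 + 3 * a + 1 := by ring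
    nlinarith [h1, h3, h4, Nat.zero_le (a ^ (t + 2)), Nat.zero_le (a ^ 2)]

lemma stmt3_le_root {r : ℕ} (hr : r ≠ 0) {x a : ℝ} (hx : 0 ≤ x) (ha : 0 ≤ a) :
    a ≤ x ^ ((1 : ℝ) / r) ↔ a ^ r ≤ x := by
  rw [one_div]
  constructor
  · intro h
    have h2 := pow_le_pow_left₀ ha h r
    rwa [Real.rpow_inv_natCast_pow hx hr] at h2
  · intro h
    have h2 := Real.rpow_le_rpow (pow_nonneg ha r) h
      (by positivity : (0:ℝ) ≤ ((r:ℝ))⁻¹)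
    rwa [Real.pow_rpow_inv_natCast ha hr] at h2

lemma stmt3_root_lt {r : ℕ} (hr : r ≠ 0) {x a : ℝ} (hx : 0 ≤ x) (ha : 0 ≤ a) :
    x ^ ((1 : ℝ) / r) < a ↔ x < a ^ r := by
  rw [← not_le, stmt3_le_root hr hx ha, not_le]

/-- The main floor computation. -/
lemma stmt3_floor (r n k : ℕ) (hr : 2 ≤ r) (hk : 1 ≤ k)
    (hlo : k ^ r < n + k) (hhi : n + k < (k + 1) ^ r) :
    ⌊(n : ℝ) + ((n : ℝ) + (n : ℝ) ^ ((1 : ℝ) / r)) ^ ((1 : ℝ) / r)⌋ = (n : ℤ) + k := by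
  have hr0 : r ≠ 0 := by omega
  have hn0 : (0:ℝ) ≤ (n:ℝ) := by positivity
  have hroot0 : (0:ℝ) ≤ (n : ℝ) ^ ((1 : ℝ) / r) := Real.rpow_nonneg hn0 _
  set z : ℝ := (n : ℝ) + (n : ℝ) ^ ((1 : ℝ) / r) with hz
  have hz0 : 0 ≤ z := by positivity
  obtain ⟨j, rfl⟩ : ∃ j, k = j + 1 := ⟨k - 1, by omega⟩
  replace hhi : n + (j + 1) < (j + 2) ^ r := by
    rw [show j + 1 + 1 = j + 2 by omega] at hhi; exact hhi
  -- j^r ≤ n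
  have hkey := stmt3_key j r hr
  have hjn : j ^ r ≤ n := by
    have := hlo
    omega
  -- lower bound: (j+1)^r ≤ z
  have hjroot : (j : ℝ) ≤ (n : ℝ) ^ ((1 : ℝ) / r) := by
    rw [stmt3_le_root hr0 hn0 (by positivity)]
    exact_mod_cast hjn
  have hlo' : ((j + 1 : ℕ) : ℝ) ^ r ≤ z := by
    have h1 : ((j + 1) ^ r : ℕ) ≤ n + j := by omega
    have h1' : (((j + 1 : ℕ)) : ℝ) ^ r ≤ (n : ℝ) + (j : ℝ) := by exact_mod_cast h1
    calc (((j + 1 : ℕ)) : ℝ) ^ r ≤ (n : ℝ) + (j : ℝ) := h1'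
      _ ≤ z := by rw [hz]; linarith
  -- upper bound: z < (j+2)^r
  have hnlt : (n : ℝ) ^ ((1 : ℝ) / r) < ((j + 2 : ℕ) : ℝ) := by
    rw [stmt3_root_lt hr0 hn0 (by positivity)]
    have h2 : n < (j + 2) ^ r := by omega
    exact_mod_cast h2
  have hhi' : z < ((j + 2 : ℕ) : ℝ) ^ r := by
    have h3 : (n : ℝ) + ((j + 2 : ℕ) : ℝ) ≤ ((j + 2 : ℕ) : ℝ) ^ r := by
      have : n + (j + 2) ≤ (j + 2) ^ r := by omega
      exact_mod_cast this
    rw [hz]; linarith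
  -- floor bounds
  have hb1 : ((j + 1 : ℕ) : ℝ) ≤ z ^ ((1 : ℝ) / r) := by
    rw [stmt3_le_root hr0 hz0 (by positivity)]
    exact hlo'
  have hb2 : z ^ ((1 : ℝ) / r) < ((j + 2 : ℕ) : ℝ) := by
    rw [stmt3_root_lt hr0 hz0 (by positivity)]
    exact hhi'
  rw [Int.floor_eq_iff]
  push_cast at hb1 hb2 ⊢
  constructor <;> linarith

theorem stmt3 (r : ℕ) (hr : 2 ≤ r) :
    {N : ℤ | ∃ n : ℕ, 1 ≤ n ∧
        N = ⌊(n : ℝ) + ((n : ℝ) + (n : ℝ) ^ ((1 : ℝ) / r)) ^ ((1 : ℝ) / r)⌋} =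
      {N : ℤ | 1 ≤ N ∧ ∀ m : ℕ, (m : ℤ) ^ r ≠ N} := by
  have hr0 : r ≠ 0 := by omega
  ext N
  simp only [Set.mem_setOf_eq]
  constructor
  · rintro ⟨n, hn, rfl⟩
    set P : ℕ → Prop := fun k => k ^ r < n + k with hP
    have hP1 : P 1 := by simp [hP]; omega
    set k : ℕ := Nat.findGreatest P (n + 1) with hkdef
    have hk1 : 1 ≤ k := Nat.le_findGreatest (by omega) hP1
    have hPk : P k := Nat.findGreatest_spec (m := 1) (by omega) hP1
    have hkle : k ≤ n := by
      by_contra h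
      have hkb : k ≤ n + 1 := Nat.findGreatest_le _
      have hkn : k = n + 1 := by omega
      have h2 : (n + 1) ^ r < n + (n + 1) := hkn ▸ hPk
      have hkey := stmt3_key n r hr
      have hn1 : 1 ≤ n ^ r := Nat.one_le_pow _ _ (by omega)
      omega
    have hnPk : ¬ P (k + 1) := Nat.findGreatest_is_greatest (n := n + 1) (by omega) (by omega)
    have hlo : k ^ r < n + k := hPk
    have hhi : n + k < (k + 1) ^ r := by
      have h3 : ¬ ((k + 1) ^ r < n + (k + 1)) := hnPk
      omega
    rw [stmt3_floor r n k hr hk1 hlo hhi]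
    refine ⟨by omega, ?_⟩
    intro m hm
    have hm' : m ^ r = n + k := by exact_mod_cast hm
    have h1 : k < m := by
      by_contra h
      have := Nat.pow_le_pow_left (show m ≤ k by omega) r
      omega
    have h2 : m < k + 1 := by
      by_contra h
      have := Nat.pow_le_pow_left (show k + 1 ≤ m by omega) r
      omega
    omega
  · rintro ⟨hN1, hNpow⟩
    set M : ℕ := N.toNat with hMdef
    have hM : (M : ℤ) = N := Int.toNat_of_nonneg (by omega)
    have hM1 : 1 ≤ M := by omega
    set P : ℕ → Prop := fun k => k ^ r ≤ M with hP
    have hP1 : P 1 := by simp [hP]; omega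
    set k : ℕ := Nat.findGreatest P M with hkdef
    have hk1 : 1 ≤ k := Nat.le_findGreatest (by omega) hP1
    have hPk : P k := Nat.findGreatest_spec (m := 1) (by omega) hP1
    have hkM : k ^ r ≤ M := hPk
    have hkne : k ^ r ≠ M := by
      intro h
      apply hNpow k
      rw [← hM, ← h]
      push_cast
      ring
    have hklt : k ^ r < M := lt_of_le_of_ne hkM hkne
    have hhiM : M < (k + 1) ^ r := by
      by_cases hc : k + 1 ≤ M
      · have h4 : ¬ P (k + 1) := Nat.findGreatest_is_greatest (n := M) (by omega) hc
        have h5 : ¬ ((k + 1) ^ r ≤ M) := h4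
        omega
      · have h1 : k + 1 ≤ (k + 1) ^ r := Nat.le_self_pow hr0 _
        omega
    have hkk : k ≤ k ^ r := Nat.le_self_pow hr0 _
    refine ⟨M - k, by omega, ?_⟩
    have hnk : M - k + k = M := by omega
    rw [stmt3_floor r (M - k) k hr hk1 (by omega) (by omega)]
    omega
end

section
/- For every integer r ≥ 2 and every integer n ≥ 1, one has ((n^r − n) + (n^r − n)^{1/r})^{1/r} < n and ((n^r − n + 1) + (n^r − n + 1)^{1/r})^{1/r} ≥ n. -/
lemma aux_nat (r n : ℕ) (hr : 2 ≤ r) (hn : 1 ≤ n) : (n - 1) ^ r + n ≤ n ^ r := by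
  have h1 : (n - 1) ^ r ≤ (n - 1) * n ^ (r - 1) := by
    calc (n - 1) ^ r = (n - 1) * (n - 1) ^ (r - 1) := by
          rw [← pow_succ']; congr 1; omega
      _ ≤ (n - 1) * n ^ (r - 1) :=
          Nat.mul_le_mul_left _ (Nat.pow_le_pow_left (by omega) _)
  have h2 : n ≤ n ^ (r - 1) := Nat.le_self_pow (by omega) n
  have h3 : (n - 1) * n ^ (r - 1) + n ^ (r - 1) = n ^ r := by
    obtain ⟨k, rfl⟩ : ∃ k, n = k + 1 := ⟨n - 1, by omega⟩
    have : (k + 1 - 1) * (k + 1) ^ (r - 1) + (k + 1) ^ (r - 1)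
        = (k + 1) * (k + 1) ^ (r - 1) := by simp; ring
    rw [this, ← pow_succ']; congr 1; omega
  omega

theorem stmt5 (r n : ℕ) (hr : 2 ≤ r) (hn : 1 ≤ n) :
    (((n : ℝ) ^ r - n) + ((n : ℝ) ^ r - n) ^ ((1 : ℝ) / r)) ^ ((1 : ℝ) / r) < n ∧
      (((n : ℝ) ^ r - n + 1) + ((n : ℝ) ^ r - n + 1) ^ ((1 : ℝ) / r)) ^ ((1 : ℝ) / r) ≥ n := by
  have hrpos : (0 : ℝ) < (1 : ℝ) / r := by positivity
  have hr0 : r ≠ 0 := by omega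
  have hn1 : (1 : ℝ) ≤ (n : ℝ) := by exact_mod_cast hn
  have hnpos : (0 : ℝ) < n := by linarith
  have hle : (n : ℝ) ≤ (n : ℝ) ^ r := by
    calc (n : ℝ) = (n : ℝ) ^ 1 := (pow_one _).symm
      _ ≤ (n : ℝ) ^ r := pow_le_pow_right₀ hn1 (by omega)
  have ha0 : (0 : ℝ) ≤ (n : ℝ) ^ r - n := by linarith
  have hkey : ((n : ℝ) ^ r) ^ ((1 : ℝ) / r) = n := by
    rw [one_div, Real.pow_rpow_inv_natCast hnpos.le hr0]
  constructor
  · -- part 1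
    have halt : (n : ℝ) ^ r - n < (n : ℝ) ^ r := by linarith
    have h1 : ((n : ℝ) ^ r - n) ^ ((1 : ℝ) / r) < n := by
      calc ((n : ℝ) ^ r - n) ^ ((1 : ℝ) / r)
          < ((n : ℝ) ^ r) ^ ((1 : ℝ) / r) := Real.rpow_lt_rpow ha0 halt hrpos
        _ = n := hkey
    have h2 : ((n : ℝ) ^ r - n) + ((n : ℝ) ^ r - n) ^ ((1 : ℝ) / r) < (n : ℝ) ^ r := by
      linarith
    have h3 : (0 : ℝ) ≤ ((n : ℝ) ^ r - n) + ((n : ℝ) ^ r - n) ^ ((1 : ℝ) / r) := by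
      have := Real.rpow_nonneg ha0 ((1 : ℝ) / r)
      linarith
    calc (((n : ℝ) ^ r - n) + ((n : ℝ) ^ r - n) ^ ((1 : ℝ) / r)) ^ ((1 : ℝ) / r)
        < ((n : ℝ) ^ r) ^ ((1 : ℝ) / r) := Real.rpow_lt_rpow h3 h2 hrpos
      _ = n := hkey
  · -- part 2
    have hm0 : (0 : ℝ) ≤ (n : ℝ) - 1 := by linarith
    have hcast : (((n - 1 : ℕ) : ℝ)) = (n : ℝ) - 1 := by
      push_cast [Nat.cast_sub hn]; ring
    have hnat := aux_nat r n hr hn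
    have hineq : ((n : ℝ) - 1) ^ r ≤ (n : ℝ) ^ r - n + 1 := by
      have : (((n - 1 : ℕ) : ℝ)) ^ r + n ≤ (n : ℝ) ^ r := by exact_mod_cast hnat
      rw [hcast] at this; linarith
    have hb0 : (0 : ℝ) ≤ (n : ℝ) ^ r - n + 1 := by linarith
    have h1 : (n : ℝ) - 1 ≤ ((n : ℝ) ^ r - n + 1) ^ ((1 : ℝ) / r) := by
      calc (n : ℝ) - 1 = (((n : ℝ) - 1) ^ r) ^ ((1 : ℝ) / r) := by
            rw [one_div, Real.pow_rpow_inv_natCast hm0 hr0]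
        _ ≤ ((n : ℝ) ^ r - n + 1) ^ ((1 : ℝ) / r) :=
            Real.rpow_le_rpow (by positivity) hineq hrpos.le
    have h2 : (n : ℝ) ^ r ≤ ((n : ℝ) ^ r - n + 1) + ((n : ℝ) ^ r - n + 1) ^ ((1 : ℝ) / r) := by
      linarith
    calc (n : ℝ) = ((n : ℝ) ^ r) ^ ((1 : ℝ) / r) := hkey.symm
      _ ≤ (((n : ℝ) ^ r - n + 1) + ((n : ℝ) ^ r - n + 1) ^ ((1 : ℝ) / r)) ^ ((1 : ℝ) / r) :=
          Real.rpow_le_rpow (by positivity) h2 hrpos.le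
end

section
/- The set {⌊n + √n + 1/2⌋ : n ∈ ℕ, n ≥ 1} equals the set of positive integers that are not perfect squares. -/
lemma key_floor (n k : ℕ) (hk : 1 ≤ k) (h1 : k^2 < n + k) (h2 : n ≤ k^2 + k) :
    ⌊(n : ℝ) + Real.sqrt n + 1 / 2⌋ = (n : ℤ) + k := by
  have hkR : (1 : ℝ) ≤ k := by exact_mod_cast hk
  have h1R : (k : ℝ)^2 < n + k := by exact_mod_cast h1
  have h2R : (n : ℝ) ≤ k^2 + k := by exact_mod_cast h2
  have h1R' : (k : ℝ)^2 - k + 1 ≤ n := by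
    have : (k:ℕ)^2 + 1 ≤ n + k := h1
    have := (by exact_mod_cast this : (k : ℝ)^2 + 1 ≤ n + k)
    linarith
  have hs1 : (k : ℝ) - 1/2 ≤ Real.sqrt n := by
    rw [show (k : ℝ) - 1/2 = √(((k:ℝ) - 1/2)^2) from (Real.sqrt_sq (by linarith)).symm]
    apply Real.sqrt_le_sqrt; nlinarith
  have hs2 : Real.sqrt n < (k : ℝ) + 1/2 := by
    have := Real.sqrt_lt' (x := (n:ℝ)) (y := (k:ℝ) + 1/2) (by linarith)
    rw [this]; nlinarith
  rw [Int.floor_eq_iff]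
  constructor <;> push_cast <;> linarith

theorem stmt6 :
    {N : ℤ | ∃ n : ℕ, 1 ≤ n ∧ N = ⌊(n : ℝ) + Real.sqrt n + 1 / 2⌋} =
      {N : ℤ | 1 ≤ N ∧ ∀ m : ℕ, (m : ℤ) ^ 2 ≠ N} := by
  ext N
  simp only [Set.mem_setOf_eq]
  constructor
  · rintro ⟨n, hn, rfl⟩
    set s := Nat.sqrt n with hs
    have hsl : s^2 ≤ n := Nat.sqrt_le' n
    have hsu : n < (s+1)^2 := Nat.lt_succ_sqrt' n
    -- choose k
    obtain ⟨k, hk1, hA, hB⟩ : ∃ k : ℕ, 1 ≤ k ∧ k^2 < n + k ∧ n ≤ k^2 + k := by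
      by_cases h : n ≤ s^2 + s
      · refine ⟨s, ?_, ?_, h⟩
        · rcases Nat.eq_zero_or_pos s with h0 | h0
          · exfalso; rw [h0] at hsu; simp at hsu; omega
          · exact h0
        · nlinarith
      · exact ⟨s+1, by omega, by nlinarith, by nlinarith⟩
    rw [key_floor n k hk1 hA hB]
    refine ⟨by omega, ?_⟩
    intro m hm
    have hm' : m^2 = n + k := by exact_mod_cast hm
    have : k < m := by nlinarith
    have : m^2 ≥ (k+1)^2 := Nat.pow_le_pow_left this 2
    nlinarith
  · rintro ⟨hN1, hN2⟩
    set M := N.toNat with hM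
    have hMN : (M : ℤ) = N := Int.toNat_of_nonneg (by omega)
    have hM1 : 1 ≤ M := by omega
    set k := Nat.sqrt M with hk
    have hkl : k^2 ≤ M := Nat.sqrt_le' M
    have hku : M < (k+1)^2 := Nat.lt_succ_sqrt' M
    have hne : k^2 ≠ M := by
      intro h
      exact hN2 k (by rw [← hMN]; exact_mod_cast h)
    have hkl' : k^2 + 1 ≤ M := by omega
    have hk2 : k ≤ k^2 := by nlinarith
    have hku' : M ≤ k^2 + 2*k := by nlinarith
    have hk1 : 1 ≤ k := by
      rcases Nat.eq_zero_or_pos k with h0 | h0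
      · exfalso; rw [h0] at hku; omega
      · exact h0
    refine ⟨M - k, by omega, ?_⟩
    have hMk : k ≤ M := by omega
    rw [key_floor (M - k) k hk1 (by omega) (by omega)]
    push_cast [hMk]
    omega
end

section
/- The set {⌊n + n^{1/3} + 1/(3·(n+1)^{1/3})⌋ : n ∈ ℕ, n ≥ 1} equals the set of positive integers that are not perfect cubes. -/
lemma key_lt (j x w : ℝ) (hj : 2 ≤ j) (hx : 1 ≤ x) (hxw : x < w)
    (hw : w^3 = x^3 + 1) (hub : x^3 + j ≤ j^3) : x + 1/(3*w) < j := by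
  have hw1 : 1 ≤ w := le_trans hx hxw.le
  have hw0 : 0 < 3*w := by linarith
  have hwj : w < j := by
    have h3 : w^3 < j^3 := by nlinarith
    nlinarith [sq_nonneg (w + j), sq_nonneg (w - j), sq_nonneg w, sq_nonneg j]
  suffices h : 1 < (j - x) * (3*w) by
    have h2 : 1/(3*w) < j - x := (div_lt_iff₀ hw0).mpr h
    linarith
  rcases le_or_gt x (j - 1) with hc | hc
  · nlinarith
  · -- tight case: x > j - 1
    have hd : (j - w) * (j^2 + j*w + w^2) ≥ j - 1 := by nlinarith
    have he : (w - x) * (w^2 + w*x + x^2) = 1 := by linear_combination hw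
    have hS1 : (0:ℝ) < j^2 + j*w + w^2 := by nlinarith
    have hS2 : (0:ℝ) < w^2 + w*x + x^2 := by nlinarith
    have hd' : (j - 1)/(j^2 + j*w + w^2) ≤ j - w := by
      rw [div_le_iff₀ hS1]; linarith [hd]
    have he' : w - x = 1/(w^2 + w*x + x^2) := by
      field_simp; linarith [he]
    have he'' : 1/(3*w^2) ≤ w - x := by
      rw [he', div_le_div_iff₀ (by positivity) hS2]; nlinarith
    have key : 3*w*((j-1)/(j^2+j*w+w^2)) + 3*w*(1/(3*w^2)) > 1 := by
      rw [gt_iff_lt, ← sub_pos]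
      have heq : 3*w*((j-1)/(j^2+j*w+w^2)) + 3*w*(1/(3*w^2)) - 1
          = ((j - w) * ((1 - w)*j + 2*w + w^2)) / (w * (j^2+j*w+w^2)) := by
        field_simp; ring
      rw [heq]
      have h1 : 0 < j - w := by linarith
      have h2 : 0 < (1 - w)*j + 2*w + w^2 := by nlinarith
      positivity
    nlinarith [mul_le_mul_of_nonneg_left hd' (by linarith : (0:ℝ) ≤ 3*w),
               mul_le_mul_of_nonneg_left he'' (by linarith : (0:ℝ) ≤ 3*w)]

lemma key_ge (k x w : ℝ) (hk : 1 ≤ k) (hx : 0 ≤ x) (hw1 : 1 ≤ w) (hwk : w ≤ k)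
    (hlb : k^3 - k + 1 ≤ x^3) : k ≤ x + 1/(3*w) := by
  have hw0 : 0 < 3*w := by linarith
  have hxk1 : k - 1 ≤ x := by
    rcases le_or_gt (k-1) x with h | h
    · exact h
    · exfalso; nlinarith [pow_lt_pow_left₀ h hx (by norm_num : (3:ℕ) ≠ 0)]
  rcases le_or_gt k x with h | h
  · have : 0 < 1/(3*w) := by positivity
    linarith
  · rw [← sub_le_iff_le_add', le_div_iff₀ hw0]
    -- (k - x) * (3*w) ≤ 1
    have hQ : (0:ℝ) < 3*k^2 - 3*k + 1 := by nlinarith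
    have h4 : (k - x)*(3*k^2 - 3*k + 1) ≤ k - 1 := by
      nlinarith [mul_nonneg (mul_nonneg (by linarith : (0:ℝ) ≤ k - x)
        (by linarith : (0:ℝ) ≤ x - (k-1))) (by linarith : (0:ℝ) ≤ x + 2*k - 1)]
    have h5 : 3*k*(k - x) < 1 := by nlinarith [mul_le_mul_of_nonneg_left h4 (by linarith : (0:ℝ) ≤ 3*k)]
    nlinarith [mul_le_mul_of_nonneg_left hwk (by linarith : (0:ℝ) ≤ 3*(k-x))]

noncomputable def cr (a : ℝ) : ℝ := a ^ ((1:ℝ)/3)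
lemma cr_nonneg {a : ℝ} : 0 ≤ a → 0 ≤ cr a := fun ha => Real.rpow_nonneg ha _
lemma cr_cube {a : ℝ} (ha : 0 ≤ a) : (cr a)^3 = a := by
  rw [cr, ← Real.rpow_natCast (a ^ ((1:ℝ)/3)) 3, ← Real.rpow_mul ha]; norm_num
lemma cr_lt_cr {a b : ℝ} (ha : 0 ≤ a) (h : a < b) : cr a < cr b := by
  have hb : 0 ≤ b := le_of_lt (lt_of_le_of_lt ha h)
  exact lt_of_pow_lt_pow_left₀ 3 (cr_nonneg hb) (by rw [cr_cube ha, cr_cube hb]; exact h)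
lemma le_cr {a b : ℝ} (ha : 0 ≤ a) (hb : 0 ≤ b) (h : b^3 ≤ a) : b ≤ cr a :=
  le_of_pow_le_pow_left₀ (n := 3) (by norm_num) (cr_nonneg ha) (by rw [cr_cube ha]; exact h)
lemma cr_le {a b : ℝ} (ha : 0 ≤ a) (hb : 0 ≤ b) (h : a ≤ b^3) : cr a ≤ b :=
  le_of_pow_le_pow_left₀ (n := 3) (by norm_num) hb (by rw [cr_cube ha]; exact h)

lemma floor_key (n k : ℕ) (hk : 1 ≤ k) (h1 : k^3 + 1 ≤ n + k) (h2 : n + (k+1) ≤ (k+1)^3) :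
    ⌊(n : ℝ) + (n : ℝ) ^ ((1 : ℝ) / 3) + 1 / (3 * ((n : ℝ) + 1) ^ ((1 : ℝ) / 3))⌋ = (n : ℤ) + k := by
  have hkk : k ≤ k^3 := Nat.le_self_pow (by norm_num) k
  have hn1 : 1 ≤ n := by omega
  show ⌊(n : ℝ) + cr (n:ℝ) + 1 / (3 * cr ((n : ℝ) + 1))⌋ = (n : ℤ) + k
  set x := cr (n:ℝ) with hxdef
  set w := cr ((n:ℝ)+1) with hwdef
  have hn0 : (0:ℝ) ≤ (n:ℝ) := by positivity
  have hx3 : x^3 = (n:ℝ) := cr_cube hn0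
  have hw3 : w^3 = (n:ℝ)+1 := cr_cube (by positivity)
  have hx1 : (1:ℝ) ≤ x := le_cr hn0 zero_le_one (by norm_num; exact_mod_cast hn1)
  have hxw : x < w := cr_lt_cr hn0 (by linarith)
  have hw1 : (1:ℝ) ≤ w := le_trans hx1 hxw.le
  have hr1 : (k:ℝ)^3 + 1 ≤ (n:ℝ) + k := by exact_mod_cast h1
  have hr2 : (n:ℝ) + ((k:ℝ)+1) ≤ ((k:ℝ)+1)^3 := by exact_mod_cast h2
  have hk1 : (1:ℝ) ≤ (k:ℝ) := by exact_mod_cast hk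
  have hup : x + 1/(3*w) < (k:ℝ)+1 := by
    apply key_lt ((k:ℝ)+1) x w (by linarith) hx1 hxw (by rw [hw3, hx3])
    rw [hx3]; linarith
  have hlo : (k:ℝ) ≤ x + 1/(3*w) := by
    rcases le_or_gt (k^3) n with h | h
    · have hxk : (k:ℝ) ≤ x := le_cr hn0 (by linarith) (by exact_mod_cast h)
      have : 0 < 1/(3*w) := by positivity
      linarith
    · have hnk : n + 1 ≤ k^3 := h
      have hwk : w ≤ (k:ℝ) := cr_le (by positivity) (by linarith) (by exact_mod_cast hnk)
      exact key_ge (k:ℝ) x w hk1 (by linarith) hw1 hwk (by rw [hx3]; linarith)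
  rw [Int.floor_eq_iff]
  constructor
  · push_cast; linarith
  · push_cast; linarith

theorem stmt7 :
    {N : ℤ | ∃ n : ℕ, 1 ≤ n ∧
        N = ⌊(n : ℝ) + (n : ℝ) ^ ((1 : ℝ) / 3) + 1 / (3 * ((n : ℝ) + 1) ^ ((1 : ℝ) / 3))⌋} =
      {N : ℤ | 1 ≤ N ∧ ∀ m : ℕ, (m : ℤ) ^ 3 ≠ N} := by
  ext N
  simp only [Set.mem_setOf_eq]
  constructor
  · rintro ⟨n, hn1, rfl⟩
    have hex : ∃ m, n + (m+2) ≤ (m+2)^3 := by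
      refine ⟨n, ?_⟩
      have a1 : n + (n+2) ≤ (n+2)^2 := by nlinarith
      have a2 : (n+2)^2 ≤ (n+2)^3 := Nat.pow_le_pow_right (by omega) (by omega)
      omega
    set M := Nat.find hex with hMdef
    set k := M + 1 with hkdef
    have h2 : n + (k+1) ≤ (k+1)^3 := by
      have := Nat.find_spec hex
      simpa [hkdef] using this
    have h1 : k^3 + 1 ≤ n + k := by
      rcases Nat.eq_zero_or_pos M with h0 | h0
      · simp [hkdef, h0]; omega
      · have := Nat.find_min hex (show M - 1 < M by omega)
        have heq : M - 1 + 2 = k := by omega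
        rw [heq] at this
        omega
    rw [floor_key n k (by omega) h1 h2]
    constructor
    · have hkk : k ≤ k^3 := Nat.le_self_pow (by norm_num) k
      omega
    · intro m hm
      have hm' : m^3 = n + k := by exact_mod_cast hm
      have hlt1 : k^3 < m^3 := by omega
      have hlt2 : m^3 < (k+1)^3 := by omega
      have c1 : k < m := by
        exact (Nat.pow_lt_pow_iff_left (by norm_num : 3 ≠ 0)).mp hlt1
      have c2 : m < k + 1 := by
        exact (Nat.pow_lt_pow_iff_left (by norm_num : 3 ≠ 0)).mp hlt2
      omega
  · rintro ⟨hN1, hNc⟩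
    lift N to ℕ using (by linarith) with N'
    have hN1' : 1 ≤ N' := by exact_mod_cast hN1
    have h2' : 2 ≤ N' := by
      rcases Nat.lt_or_ge N' 2 with h | h
      · exfalso
        have : N' = 1 := by omega
        exact hNc 1 (by simp [this])
      · exact h
    have hex : ∃ m, N' < (m+1)^3 := by
      refine ⟨N', ?_⟩
      have := Nat.le_self_pow (by norm_num : (3:ℕ) ≠ 0) (N'+1)
      omega
    set M := Nat.find hex with hMdef
    have hM : N' < (M+1)^3 := Nat.find_spec hex
    have hM1 : 1 ≤ M := by
      by_contra h
      have h0 : M = 0 := by omega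
      have := hM
      rw [h0] at this
      simp at this
      omega
    have hlow : M^3 ≤ N' := by
      have := Nat.find_min hex (show M - 1 < M by omega)
      have heq : M - 1 + 1 = M := by omega
      rw [heq] at this
      omega
    have hne : M^3 ≠ N' := by
      intro h
      exact hNc M (by exact_mod_cast h)
    have hMM : M ≤ M^3 := Nat.le_self_pow (by norm_num) M
    refine ⟨N' - M, by omega, ?_⟩
    rw [floor_key (N' - M) M hM1 (by omega) (by omega)]
    omega
end

section
/- For every integer a ≥ 2 and every natural number n ≥ 1, log_a(a^n − n + log_a(a^n − n)) < n and log_a(a^n − n + 1 + log_a(a^n − n + 1)) ≥ n. -/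
/-!
Put `x = aⁿ - n`, so that `x + n = aⁿ`. Since `1 ≤ x < aⁿ`, we have `0 ≤ log_a x < n`, hence
`x + log_a x < aⁿ`, which gives the strict upper bound. For the lower bound, `aⁿ⁻¹ ≤ x + 1`
(because `aⁿ⁻¹ + (n - 1) ≤ aⁿ`), so `log_a (x + 1) ≥ n - 1` and `x + 1 + log_a (x + 1) ≥ aⁿ`.
-/

open Real

namespace Real

variable {b x y : ℝ}

lemma logb_self_pow (hb : 1 < b) (k : ℕ) : logb b (b ^ k) = k := by
  rw [logb_pow, logb_self_eq_one hb, mul_one]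

lemma logb_add_logb_lt_logb (hb : 1 < b) (hx : 1 ≤ x) (hxy : x < y)
    (hy : x + logb b y ≤ y) : logb b (x + logb b x) < logb b y := by
  have hlog_lt : logb b x < logb b y := logb_lt_logb hb (by linarith) hxy
  have hlog_nonneg : 0 ≤ logb b x := logb_nonneg hb hx
  exact logb_lt_logb hb (by linarith) (by linarith)

lemma logb_le_logb_add_logb {z : ℝ} (hb : 1 < b) (hz : 0 < z) (hzx : z ≤ x) (hy : 0 < y)
    (hyx : y ≤ x + logb b z) : logb b y ≤ logb b (x + logb b x) := by
  have hlog_le : logb b z ≤ logb b x := logb_le_logb_of_le hb hz hzx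
  exact logb_le_logb_of_le hb hy (by linarith)

end Real

lemma Nat.pow_add_le_pow_succ {a : ℕ} (ha : 2 ≤ a) (m : ℕ) : a ^ m + m ≤ a ^ (m + 1) := by
  have hm : m < a ^ m := Nat.lt_pow_self (by omega)
  calc a ^ m + m ≤ a ^ m * 2 := by omega
    _ ≤ a ^ m * a := Nat.mul_le_mul_left _ ha
    _ = a ^ (m + 1) := (pow_succ a m).symm

theorem stmt9 (a : ℕ) (ha : 2 ≤ a) (n : ℕ) (hn : 1 ≤ n) :
    Real.logb a ((a : ℝ) ^ n - n + Real.logb a ((a : ℝ) ^ n - n)) < n ∧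
      Real.logb a ((a : ℝ) ^ n - n + 1 + Real.logb a ((a : ℝ) ^ n - n + 1)) ≥ n := by
  have hb : (1 : ℝ) < a := by exact_mod_cast ha
  obtain ⟨m, rfl⟩ := Nat.exists_eq_add_of_le' hn
  have hlog : logb a ((a : ℝ) ^ (m + 1)) = m + 1 := by
    rw [logb_self_pow hb]; push_cast; ring
  have hlog_pred : logb a ((a : ℝ) ^ m) = m := logb_self_pow hb m
  have hsucc : ((m + 1 : ℕ) : ℝ) + 1 ≤ (a : ℝ) ^ (m + 1) := by
    exact_mod_cast Nat.lt_pow_self (n := m + 1) (by omega)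
  have hpred : (a : ℝ) ^ m + m ≤ (a : ℝ) ^ (m + 1) := by
    exact_mod_cast Nat.pow_add_le_pow_succ ha m
  push_cast at hsucc ⊢
  constructor
  · calc _ < logb a ((a : ℝ) ^ (m + 1)) :=
          logb_add_logb_lt_logb hb (by linarith) (by linarith) (by rw [hlog]; linarith)
      _ = m + 1 := hlog
  · calc (m : ℝ) + 1 = logb a ((a : ℝ) ^ (m + 1)) := hlog.symm
      _ ≤ _ := logb_le_logb_add_logb hb (z := (a : ℝ) ^ m) (by positivity) (by linarith)
          (by positivity) (by rw [hlog_pred]; linarith)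
end

section
/- Let Φ = (1+√5)/2 and let ψ(x) = log_Φ(√5·(log_Φ(√5·x) + x) − 5 + 3/x) − 2. Then the set {⌊n + ψ(n)⌋ : n ∈ ℕ, n ≥ 2} equals the set of integers ≥ 1 that are not Fibonacci numbers. -/
/-!
For `n ≥ 2` pick `k ≥ 4` with `F_k + 3 ≤ n + k ≤ F_{k+1} + 1`; these windows tile `[2, ∞)`.
Write the function of the statement as `log_φ E(n) - 2`. `E` is increasing and, by Binet's
formula `√5 F_k = φ^k - φ'^k` with `|φ'| < 1`, at the two ends of the window `√5 n` is `φ^k`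
(resp. `φ^(k+1)`) up to a term linear in `k`, which the summand `√5 log_φ (√5 n)` of `E(n)`
cancels. Hence `φ^k ≤ E(n) < φ^(k+1)` on the window, and the floor in question is `n + k - 2`,
which lies strictly between `F_k` and `F_{k+1}`. Conversely a non-Fibonacci `M`, necessarily
`≥ 4`, lies strictly between some `F_k` and `F_{k+1}` and is reached from `n = M + 2 - k`.
-/

open Real

section

-- Mathlib's notation `ψ` for `goldenConj` must not reach `stmt11`, which binds its own `ψ`.
open goldenRatio

/-- The function `ψ` of the statement is `fun x => logb φ (logArg x) - 2`. -/
noncomputable def logArg (x : ℝ) : ℝ :=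
  √5 * (logb φ (√5 * x) + x) - 5 + 3 / x

lemma sqrt_five_gt : 2.2360679 < √5 := by
  rw [lt_sqrt (by norm_num)]; norm_num

lemma sqrt_five_lt : √5 < 2.2360680 := by
  rw [sqrt_lt' (by norm_num)]; norm_num

lemma sqrt_five_mul_pow_two_mul (x : ℝ) (j : ℕ) : (√5 * x) ^ (2 * j) = (5 * x ^ 2) ^ j := by
  rw [pow_mul, mul_pow, sq_sqrt (by norm_num)]

lemma sqrt_five_mul_fib (n : ℕ) : √5 * Nat.fib n = φ ^ n - ψ ^ n := by
  rw [coe_fib_eq]; field_simp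

lemma abs_goldenConj_pow_le {j k : ℕ} (h : j ≤ k) : |ψ ^ k| ≤ 0.618034 ^ j := by
  have hψ : |ψ| ≤ 0.618034 := by
    rw [abs_le, goldenConj]; constructor <;> linarith [sqrt_five_gt, sqrt_five_lt]
  rw [abs_pow]
  calc |ψ| ^ k ≤ |ψ| ^ j := pow_le_pow_of_le_one (abs_nonneg _) (hψ.trans (by norm_num)) h
    _ ≤ 0.618034 ^ j := pow_le_pow_left₀ (abs_nonneg _) hψ j

lemma div_le_logb_of_pow_le {b x : ℝ} {p q : ℕ} (hb : 1 < b) (hq : 0 < q)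
    (h : b ^ p ≤ x ^ q) : (p : ℝ) / q ≤ logb b x := by
  have := logb_le_logb_of_le hb (pow_pos (by linarith) p) h
  rw [logb_pow, logb_pow, logb_self_eq_one hb, mul_one] at this
  rwa [div_le_iff₀ (by positivity), mul_comm]

lemma logb_le_div_of_le_pow {b x : ℝ} {p q : ℕ} (hb : 1 < b) (hx : 0 < x) (hq : 0 < q)
    (h : x ^ q ≤ b ^ p) : logb b x ≤ p / q := by
  have := logb_le_logb_of_le hb (pow_pos hx q) h
  rw [logb_pow, logb_pow, logb_self_eq_one hb, mul_one] at this
  rwa [le_div_iff₀ (by positivity), mul_comm]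

lemma logArg_mono {a b : ℝ} (ha : 2 ≤ a) (hab : a ≤ b) : logArg a ≤ logArg b := by
  have hlog : logb φ (√5 * a) ≤ logb φ (√5 * b) :=
    logb_le_logb_of_le one_lt_goldenRatio (by positivity) (by gcongr)
  have ha₀ : 0 < a := by linarith
  have hb₀ : 0 < b := by linarith
  have hab₄ : 4 ≤ a * b := by nlinarith
  have hinv : 3 / a - 3 / b ≤ 3 / 4 * (b - a) := by
    rw [div_sub_div _ _ ha₀.ne' hb₀.ne', div_le_iff₀ (by positivity)]
    nlinarith [mul_nonneg (sub_nonneg.2 hab₄) (sub_nonneg.2 hab)]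
  unfold logArg
  nlinarith [sqrt_five_gt, mul_le_mul_of_nonneg_left hlog (sqrt_nonneg 5)]

lemma pow_le_logArg_of_pow_le {k p q : ℕ} {x : ℝ} (hq : 0 < q)
    (hlog : φ ^ p ≤ (√5 * x) ^ q) (h : φ ^ k ≤ √5 * (p / q + x) - 5 + 3 / x) :
    φ ^ k ≤ logArg x := by
  have := div_le_logb_of_pow_le one_lt_goldenRatio hq hlog
  unfold logArg
  nlinarith [mul_le_mul_of_nonneg_left this (sqrt_nonneg 5)]

lemma logArg_lt_pow_of_le_pow {k p q : ℕ} {x : ℝ} (hx : 0 < x) (hq : 0 < q)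
    (hlog : (√5 * x) ^ q ≤ φ ^ p) (h : √5 * (p / q + x) - 5 + 3 / x < φ ^ k) :
    logArg x < φ ^ k := by
  have := logb_le_div_of_le_pow one_lt_goldenRatio (by positivity) hq hlog
  unfold logArg
  nlinarith [mul_le_mul_of_nonneg_left this (sqrt_nonneg 5)]

lemma linear_le_goldenRatio_pow {m : ℕ} (hm : 7 ≤ m) :
    √5 * (m - 2) + 1 / 45 ≤ (φ - 113 / 100) * φ ^ m := by
  induction m, hm using Nat.le_induction with
  | base =>
    simp only [← fib_succ_sub_goldenConj_mul_fib]
    norm_num [goldenRatio, goldenConj]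
    nlinarith [sqrt_five_gt, sqrt_five_lt]
  | succ m hm ih =>
    have hφ : 1.618 ≤ φ := by rw [goldenRatio]; linarith [sqrt_five_gt]
    have hmR : (7 : ℝ) ≤ m := by exact_mod_cast hm
    have hA : √5 * 5 ≤ (φ - 113 / 100) * φ ^ m := by nlinarith [sqrt_nonneg 5]
    have hgrow : √5 ≤ (φ - 113 / 100) * φ ^ m * (φ - 1) := by
      nlinarith [mul_nonneg (sub_nonneg.2 hA) (by linarith : (0:ℝ) ≤ φ - 1), sqrt_nonneg 5]
    push_cast
    rw [pow_succ]
    nlinarith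

lemma pow_le_logArg_of_eight_le {k : ℕ} (hk : 8 ≤ k) :
    φ ^ k ≤ logArg (Nat.fib k + 3 - k) := by
  obtain ⟨m, rfl⟩ : ∃ m, k = m + 1 := ⟨k - 1, by omega⟩
  set x : ℝ := Nat.fib (m + 1) + 3 - (m + 1 : ℕ) with hx_def
  have hx : √5 * x = φ ^ (m + 1) - ψ ^ (m + 1) - √5 * (m - 2) := by
    rw [← sqrt_five_mul_fib, hx_def]; push_cast; ring
  have hψ : |ψ ^ (m + 1)| ≤ 1 / 45 :=
    (abs_goldenConj_pow_le (by omega : 8 ≤ m + 1)).trans (by norm_num)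
  have hlin := linear_le_goldenRatio_pow (by omega : 7 ≤ m)
  have hx_ge : 113 / 100 * φ ^ m ≤ √5 * x := by
    rw [hx, pow_succ]; linarith [(abs_le.mp hψ).2]
  have hx₀ : 0 < x := by
    have : 0 < √5 * x := lt_of_lt_of_le (by positivity) hx_ge
    exact pos_of_mul_pos_right this (sqrt_nonneg 5)
  -- `φ ≤ (113/100)^4` gives `logb φ (√5 * x) ≥ m + 1/4`, and `9/4 * √5 - 5 > 1/45 ≥ |ψ^(m+1)|`.
  refine pow_le_logArg_of_pow_le (p := 4 * m + 1) (q := 4) (by norm_num) ?_ ?_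
  · have hφ : φ ≤ (113 / 100) ^ 4 := by rw [goldenRatio]; linarith [sqrt_five_lt]
    calc φ ^ (4 * m + 1) = (φ ^ m) ^ 4 * φ := by ring
      _ ≤ (φ ^ m) ^ 4 * (113 / 100) ^ 4 := by gcongr
      _ = (113 / 100 * φ ^ m) ^ 4 := by ring
      _ ≤ (√5 * x) ^ 4 := by gcongr
  · have : 0 < 3 / x := by positivity
    have hsplit : √5 * (((4 * m + 1 : ℕ) : ℝ) / (4 : ℕ) + x) = √5 * (m + 1 / 4) + √5 * x := by
      push_cast; ring
    rw [hsplit, hx]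
    nlinarith [(abs_le.mp hψ).2, sqrt_five_gt]

lemma add_seven_le_fib_succ {k : ℕ} (hk : 6 ≤ k) : k + 7 ≤ Nat.fib (k + 1) := by
  induction k, hk using Nat.le_induction with
  | base => decide
  | succ k hk ih =>
    rw [Nat.fib_add_two]
    have := Nat.fib_pos.2 (by omega : 0 < k)
    omega

lemma logArg_lt_pow_of_six_le {k : ℕ} (hk : 6 ≤ k) :
    logArg (Nat.fib (k + 1) + 1 - k) < φ ^ (k + 1) := by
  set y : ℝ := Nat.fib (k + 1) + 1 - k with hy_def
  have hy : √5 * y = φ ^ (k + 1) - ψ ^ (k + 1) - √5 * (k - 1) := by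
    rw [← sqrt_five_mul_fib, hy_def]; ring
  have hψ : |ψ ^ (k + 1)| ≤ 1 / 28 :=
    (abs_goldenConj_pow_le (by omega : 7 ≤ k + 1)).trans (by norm_num)
  have hy₈ : 8 ≤ y := by
    have : ((k + 7 : ℕ) : ℝ) ≤ Nat.fib (k + 1) := by exact_mod_cast add_seven_le_fib_succ hk
    push_cast at this
    linarith
  have hkR : (6 : ℝ) ≤ k := by exact_mod_cast hk
  -- `logb φ (√5 * y) ≤ k + 1`, and `5 - 2 * √5 > 3/8 + 1/28 ≥ 3/y + |ψ^(k+1)|`.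
  refine logArg_lt_pow_of_le_pow (p := k + 1) (q := 1) (by linarith) one_pos ?_ ?_
  · rw [pow_one, hy]
    nlinarith [(abs_le.mp hψ).1, sqrt_five_gt]
  · have : 3 / y ≤ 3 / 8 := by gcongr
    have hsplit : √5 * (((k + 1 : ℕ) : ℝ) / (1 : ℕ) + y) = √5 * (k + 1) + √5 * y := by
      push_cast; ring
    rw [hsplit, hy]
    nlinarith [(abs_le.mp hψ).1, sqrt_five_lt]

lemma pow_le_logArg_fib {k : ℕ} (hk : 4 ≤ k) : φ ^ k ≤ logArg (Nat.fib k + 3 - k) := by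
  rcases lt_or_ge k 8 with hk8 | hk8
  · interval_cases k <;> norm_num
    · refine pow_le_logArg_of_pow_le (p := 11) (q := 2 * 2) (by norm_num) ?_ ?_ <;>
        simp only [sqrt_five_mul_pow_two_mul, ← fib_succ_sub_goldenConj_mul_fib] <;>
        norm_num [goldenConj] <;> linarith [sqrt_five_gt, sqrt_five_lt]
    · refine pow_le_logArg_of_pow_le (p := 23) (q := 2 * 3) (by norm_num) ?_ ?_ <;>
        simp only [sqrt_five_mul_pow_two_mul, ← fib_succ_sub_goldenConj_mul_fib] <;>
        norm_num [goldenConj] <;> linarith [sqrt_five_gt, sqrt_five_lt]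
    · refine pow_le_logArg_of_pow_le (p := 10) (q := 2 * 1) (by norm_num) ?_ ?_ <;>
        simp only [sqrt_five_mul_pow_two_mul, ← fib_succ_sub_goldenConj_mul_fib] <;>
        norm_num [goldenConj] <;> linarith [sqrt_five_gt, sqrt_five_lt]
    · refine pow_le_logArg_of_pow_le (p := 37) (q := 2 * 3) (by norm_num) ?_ ?_ <;>
        simp only [sqrt_five_mul_pow_two_mul, ← fib_succ_sub_goldenConj_mul_fib] <;>
        norm_num [goldenConj] <;> linarith [sqrt_five_gt, sqrt_five_lt]
  · exact pow_le_logArg_of_eight_le hk8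

lemma logArg_fib_lt_pow {k : ℕ} (hk : 4 ≤ k) :
    logArg (Nat.fib (k + 1) + 1 - k) < φ ^ (k + 1) := by
  rcases lt_or_ge k 6 with hk6 | hk6
  · interval_cases k <;> norm_num
    · refine logArg_lt_pow_of_le_pow (p := 4) (q := 1) (by norm_num) one_pos ?_ ?_ <;>
        simp only [← fib_succ_sub_goldenConj_mul_fib] <;>
        norm_num [goldenConj] <;> linarith [sqrt_five_gt, sqrt_five_lt]
    · refine logArg_lt_pow_of_le_pow (p := 5) (q := 1) (by norm_num) one_pos ?_ ?_ <;>
        simp only [← fib_succ_sub_goldenConj_mul_fib] <;>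
        norm_num [goldenConj] <;> linarith [sqrt_five_gt, sqrt_five_lt]
  · exact logArg_lt_pow_of_six_le hk6

lemma floor_add_logb_logArg_sub_two {n k : ℕ} (hk : 4 ≤ k) (h₁ : Nat.fib k + 3 ≤ n + k)
    (h₂ : n + k ≤ Nat.fib (k + 1) + 1) : ⌊(n : ℝ) + (logb φ (logArg n) - 2)⌋ = n + k - 2 := by
  have hlo : (Nat.fib k : ℝ) + 3 - k ≤ n := by
    rw [sub_le_iff_le_add]; exact_mod_cast h₁
  have hhi : (n : ℝ) ≤ Nat.fib (k + 1) + 1 - k := by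
    rw [le_sub_iff_add_le]; exact_mod_cast h₂
  have htwo : (2 : ℝ) ≤ Nat.fib k + 3 - k := by
    have : (k : ℝ) ≤ Nat.fib k + 1 := by exact_mod_cast Nat.le_fib_add_one k
    linarith
  have hE₁ : φ ^ k ≤ logArg n := (pow_le_logArg_fib hk).trans (logArg_mono htwo hlo)
  have hE₂ : logArg n < φ ^ (k + 1) :=
    (logArg_mono (htwo.trans hlo) hhi).trans_lt (logArg_fib_lt_pow hk)
  have hE₀ : 0 < logArg n := lt_of_lt_of_le (by positivity) hE₁
  have hlog₁ : (k : ℝ) ≤ logb φ (logArg n) := by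
    rw [le_logb_iff_rpow_le one_lt_goldenRatio hE₀, rpow_natCast]; exact hE₁
  have hlog₂ : logb φ (logArg n) < k + 1 := by
    rw [logb_lt_iff_lt_rpow one_lt_goldenRatio hE₀]; exact_mod_cast hE₂
  rw [Int.floor_eq_iff]
  push_cast
  constructor <;> linarith

lemma exists_apply_le_and_lt_apply_succ {f : ℕ → ℕ} {a x : ℕ}
    (hf : ∀ k, a ≤ k → f k < f (k + 1)) (hx : f a ≤ x) :
    ∃ k, a ≤ k ∧ f k ≤ x ∧ x < f (k + 1) := by
  induction x, hx using Nat.le_induction with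
  | base => exact ⟨a, le_rfl, le_rfl, hf a le_rfl⟩
  | succ x _ ih =>
    obtain ⟨k, hak, hkx, hxk⟩ := ih
    rcases (Nat.succ_le_of_lt hxk).lt_or_eq with hlt | heq
    · exact ⟨k, hak, hkx.trans x.le_succ, hlt⟩
    · have := hf (k + 1) (hak.trans k.le_succ)
      exact ⟨k + 1, hak.trans k.le_succ, heq.ge, by omega⟩

lemma exists_fib_window {n : ℕ} (hn : 2 ≤ n) :
    ∃ k, 4 ≤ k ∧ Nat.fib k + 3 ≤ n + k ∧ n + k ≤ Nat.fib (k + 1) + 1 := by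
  have hmono : ∀ k, 4 ≤ k → Nat.fib k + 3 - k < Nat.fib (k + 1) + 3 - (k + 1) := by
    intro k hk
    have h₁ := Nat.le_fib_add_one k
    have h₂ : 2 ≤ Nat.fib (k - 1) := Nat.fib_mono (by omega : 3 ≤ k - 1)
    have h₃ : Nat.fib (k + 1) = Nat.fib (k - 1) + Nat.fib k := by
      rw [show k + 1 = k - 1 + 2 by omega, Nat.fib_add_two, show k - 1 + 1 = k by omega]
    omega
  obtain ⟨k, hk, h₁, h₂⟩ := exists_apply_le_and_lt_apply_succ (f := fun k => Nat.fib k + 3 - k)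
    hmono (by simpa [show Nat.fib 4 = 3 from rfl] using hn)
  have := Nat.le_fib_add_one k
  exact ⟨k, hk, by omega, by omega⟩

lemma one_le_and_forall_fib_ne_iff {M : ℕ} :
    (1 ≤ M ∧ ∀ j, Nat.fib j ≠ M) ↔ ∃ k, 4 ≤ k ∧ Nat.fib k < M ∧ M < Nat.fib (k + 1) := by
  constructor
  · rintro ⟨hM, hfib⟩
    have h₄ : Nat.fib 4 ≤ M := by
      by_contra! h
      interval_cases M
      exacts [hfib 1 rfl, hfib 3 rfl]
    obtain ⟨k, hk, h₁, h₂⟩ := exists_apply_le_and_lt_apply_succ (f := Nat.fib)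
      (fun k hk => Nat.fib_lt_fib_succ (by omega)) h₄
    exact ⟨k, hk, h₁.lt_of_ne (hfib k), h₂⟩
  · rintro ⟨k, hk, h₁, h₂⟩
    refine ⟨by omega, fun j hj => ?_⟩
    rcases le_or_gt j k with hjk | hjk
    · exact absurd (Nat.fib_mono hjk) (by omega)
    · exact absurd (Nat.fib_mono (show k + 1 ≤ j by omega)) (by omega)

end

theorem stmt11 :
    let Φ : ℝ := (1 + Real.sqrt 5) / 2
    let ψ : ℝ → ℝ := fun x => Real.logb Φ (Real.sqrt 5 * (Real.logb Φ (Real.sqrt 5 * x) + x) - 5 + 3 / x) - 2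
    {N : ℤ | ∃ n : ℕ, 2 ≤ n ∧ N = ⌊(n : ℝ) + ψ n⌋} =
      {N : ℤ | 1 ≤ N ∧ ∀ k : ℕ, (Nat.fib k : ℤ) ≠ N} := by
  intro Φ ψ
  ext N
  change (∃ n : ℕ, 2 ≤ n ∧ N = ⌊(n : ℝ) + (logb goldenRatio (logArg n) - 2)⌋) ↔ _
  constructor
  · rintro ⟨n, hn, rfl⟩
    obtain ⟨k, hk, h₁, h₂⟩ := exists_fib_window hn
    obtain ⟨hM, hfib⟩ := (one_le_and_forall_fib_ne_iff (M := n + k - 2)).mpr ⟨k, hk, by omega, by omega⟩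
    rw [floor_add_logb_logArg_sub_two hk h₁ h₂]
    exact ⟨by omega, fun j hj => hfib j (by omega)⟩
  · rintro ⟨hN, hfib⟩
    lift N to ℕ using (by omega)
    obtain ⟨k, hk, h₁, h₂⟩ :=
      (one_le_and_forall_fib_ne_iff (M := N)).mp ⟨by omega, fun j hj => hfib j (by exact_mod_cast hj)⟩
    have := Nat.le_fib_add_one k
    refine ⟨N + 2 - k, by omega, ?_⟩
    rw [floor_add_logb_logArg_sub_two hk (by omega) (by omega)]
    omega
end

section
/- For every natural number n > 10, √5·(log_Φ(√5·(F_{n+2} − n + 1)) + F_{n+2} − n + 1) − 5 + 3/(F_{n+2} − n + 1) > Φ^{n+2}, where Φ = (1+√5)/2. -/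
/-! Binet's formula gives `Φ^(n+2) ≤ √5 F_{n+2} + 1`, so it suffices to show that
`√5 (log_Φ(√5 x) - n + 1) - 5 + 3/x > 1` for `x = F_{n+2} - n + 1`. Since `F_{n+2} ≥ 8n` for
`n > 10`, the correction `n - 1` is small compared to `F_{n+2}`, and `√5 x` still exceeds
`Φ^(n+2) / Φ^(3/10)`; hence `log_Φ(√5 x) ≥ n + 17/10`, and `√5 · 27/10 > 6` closes the gap. -/

open Real goldenRatio

theorem eight_mul_le_fib_add_two {n : ℕ} (hn : 11 ≤ n) : 8 * n ≤ Nat.fib (n + 2) := by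
  induction n, hn using Nat.le_induction with
  | base => decide
  | succ m hm ih =>
    have h8 : 8 ≤ Nat.fib (m + 1) := le_trans (by decide) (Nat.fib_mono (by omega : 12 ≤ m + 1))
    have : Nat.fib (m + 3) = Nat.fib (m + 1) + Nat.fib (m + 2) := Nat.fib_add_two
    show 8 * (m + 1) ≤ Nat.fib (m + 3)
    omega

theorem goldenRatio_pow_le_sqrt_five_mul_fib_add_one (n : ℕ) :
    φ ^ n ≤ √5 * Nat.fib n + 1 := by
  have hbinet : √5 * Nat.fib n = φ ^ n - ψ ^ n := by
    rw [coe_fib_eq]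
    field_simp
  have hψ : |ψ| ≤ 1 := abs_le.mpr ⟨neg_one_lt_goldenConj.le, goldenConj_neg.le.trans zero_le_one⟩
  have hψn : ψ ^ n ≤ 1 := by
    calc ψ ^ n ≤ |ψ ^ n| := le_abs_self _
      _ = |ψ| ^ n := abs_pow ψ n
      _ ≤ 1 := pow_le_one₀ (abs_nonneg ψ) hψ
  linarith

theorem le_goldenRatio_rpow_three_div_ten : (100 / 87 : ℝ) ≤ φ ^ (3 / 10 : ℝ) := by
  have hcube : φ ^ 3 = 2 + √5 := by
    have h5 : √5 ^ 2 = 5 := sq_sqrt (by norm_num)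
    linear_combination ((√5 + 3) / 8) * h5
  have htenth : (φ ^ (3 / 10 : ℝ)) ^ 10 = φ ^ 3 := by
    rw [← rpow_natCast, ← rpow_mul goldenRatio_pos.le]
    norm_num
  refine le_of_pow_le_pow_left₀ (n := 10) (by norm_num) (by positivity) ?_
  rw [htenth, hcube]
  nlinarith [sqrt_nonneg 5, sq_sqrt (show (0 : ℝ) ≤ 5 by norm_num)]

theorem add_seventeen_div_ten_le_logb_goldenRatio {n : ℕ} (hn : 11 ≤ n) :
    (n : ℝ) + 17 / 10 ≤ logb φ (√5 * ((Nat.fib (n + 2) : ℝ) - n + 1)) := by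
  have hfib : 8 * (n : ℝ) ≤ Nat.fib (n + 2) := by exact_mod_cast eight_mul_le_fib_add_two hn
  have hn' : (11 : ℝ) ≤ n := by exact_mod_cast hn
  have hs : (2 : ℝ) < √5 := by
    rw [lt_sqrt (by norm_num)]
    norm_num
  have hsF := mul_le_mul_of_nonneg_left hfib (sqrt_nonneg 5)
  rw [le_logb_iff_rpow_le one_lt_goldenRatio (by nlinarith)]
  have hsplit : φ ^ ((n : ℝ) + 17 / 10) = φ ^ (n + 2) / φ ^ (3 / 10 : ℝ) := by
    rw [eq_div_iff (by positivity), ← rpow_natCast, ← rpow_add goldenRatio_pos]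
    push_cast
    ring_nf
  calc φ ^ ((n : ℝ) + 17 / 10) = φ ^ (n + 2) / φ ^ (3 / 10 : ℝ) := hsplit
    _ ≤ (√5 * Nat.fib (n + 2) + 1) / (100 / 87) :=
        div_le_div₀ (by positivity) (goldenRatio_pow_le_sqrt_five_mul_fib_add_one _)
          (by norm_num) le_goldenRatio_rpow_three_div_ten
    _ ≤ √5 * ((Nat.fib (n + 2) : ℝ) - n + 1) := by nlinarith

theorem stmt16 (n : ℕ) (hn : 10 < n) :
    let Φ : ℝ := (1 + Real.sqrt 5) / 2
    Real.sqrt 5 * (Real.logb Φ (Real.sqrt 5 * ((Nat.fib (n + 2) : ℝ) - n + 1)) + (Nat.fib (n + 2) : ℝ) - n + 1)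
        - 5 + 3 / ((Nat.fib (n + 2) : ℝ) - n + 1) > Φ ^ (n + 2) := by
  intro Φ
  have hlog := add_seventeen_div_ten_le_logb_goldenRatio hn
  have hbinet := goldenRatio_pow_le_sqrt_five_mul_fib_add_one (n + 2)
  have hfib : 8 * (n : ℝ) ≤ Nat.fib (n + 2) := by exact_mod_cast eight_mul_le_fib_add_two hn
  have hx : 0 < 3 / ((Nat.fib (n + 2) : ℝ) - n + 1) := div_pos (by norm_num) (by linarith)
  have hs : (2.23 : ℝ) < √5 := by
    rw [lt_sqrt (by norm_num)]
    norm_num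
  linarith [mul_le_mul_of_nonneg_left hlog (sqrt_nonneg 5)]
end
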